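/- Kraus condition for the quantum case: if matrices K₁,…,Kₙ and L₁,…,Lₘ satisfy Σᵢ Kᵢ† Kᵢ ≤ I, Σⱼ Lⱼ† Lⱼ ≤ I, and complex amplitudes νᵢ, μⱼ satisfy Σᵢ |νᵢ|² ≤ 1 and Σⱼ |μⱼ|² ≤ 1, then the operators M_{ij} := |0⟩⟨0| ⊗ (μⱼ Kᵢ) + |1⟩⟨1| ⊗ (νᵢ Lⱼ) satisfy Σ_{i,j} M_{ij}† M_{ij} ≤ I. -/

import Mathlib

/-!
Since `|0⟩⟨0|` and `|1⟩⟨1|` are orthogonal projections, the cross terms of `M_{ij}† M_{ij}` vanish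
and `M_{ij}† M_{ij} = |0⟩⟨0| ⊗ |μⱼ|² Kᵢ† Kᵢ + |1⟩⟨1| ⊗ |νᵢ|² Lⱼ† Lⱼ`. Summing over `i, j` and
using `|0⟩⟨0| + |1⟩⟨1| = I`, the defect `I - Σ M_{ij}† M_{ij}` is
`|0⟩⟨0| ⊗ (I - (Σⱼ |μⱼ|²) S) + |1⟩⟨1| ⊗ (I - (Σᵢ |νᵢ|²) T)` with `S = Σ Kᵢ† Kᵢ` and
`T = Σ Lⱼ† Lⱼ`, and `I - c S = (I - S) + (1 - c) S ≥ 0` for `0 ≤ S ≤ I` and `c ≤ 1`.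
-/

open Matrix Kronecker ComplexOrder

noncomputable def E00 : Matrix (Fin 2) (Fin 2) ℂ := Matrix.single 0 0 1
noncomputable def E11 : Matrix (Fin 2) (Fin 2) ℂ := Matrix.single 1 1 1

namespace Matrix

variable {ι l m n p : Type*}

theorem kronecker_sum_right {α : Type*} [CommSemiring α] (A : Matrix l m α) (s : Finset ι)
    (B : ι → Matrix n p α) : A ⊗ₖ ∑ i ∈ s, B i = ∑ i ∈ s, A ⊗ₖ B i :=
  map_sum (kroneckerBilinear (R := α) A) B s

theorem kronecker_sub_right {α : Type*} [CommRing α] (A : Matrix l m α) (B C : Matrix n p α) :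
    A ⊗ₖ (B - C) = A ⊗ₖ B - A ⊗ₖ C :=
  map_sub (kroneckerBilinear (R := α) A) B C

theorem one_sub_kronecker_add_kronecker {α : Type*} [CommRing α] [DecidableEq m] [DecidableEq n]
    {P Q : Matrix m m α} (hPQ : P + Q = 1) (A B : Matrix n n α) :
    1 - (P ⊗ₖ A + Q ⊗ₖ B) = P ⊗ₖ (1 - A) + Q ⊗ₖ (1 - B) := by
  rw [kronecker_sub_right, kronecker_sub_right, ← one_kronecker_one, ← hPQ, add_kronecker]
  abel

theorem conjTranspose_mul_self_kronecker_add_kronecker {α : Type*} [CommRing α] [StarRing α]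
    [Fintype m] [Fintype n] {P Q : Matrix m m α} (hP : Pᴴ * P = P) (hQ : Qᴴ * Q = Q)
    (hPQ : Pᴴ * Q = 0) (hQP : Qᴴ * P = 0) (A B : Matrix n p α) :
    (P ⊗ₖ A + Q ⊗ₖ B)ᴴ * (P ⊗ₖ A + Q ⊗ₖ B) = P ⊗ₖ (Aᴴ * A) + Q ⊗ₖ (Bᴴ * B) := by
  rw [conjTranspose_add, conjTranspose_kronecker, conjTranspose_kronecker, Matrix.add_mul,
    Matrix.mul_add, Matrix.mul_add, ← mul_kronecker_mul, ← mul_kronecker_mul, ← mul_kronecker_mul,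
    ← mul_kronecker_mul, hP, hQ, hPQ, hQP, zero_kronecker, zero_kronecker, add_zero, zero_add]

variable {𝕜 : Type*} [RCLike 𝕜]

theorem conjTranspose_smul_mul_smul [Fintype m] (c : 𝕜) (A : Matrix m n 𝕜) :
    (c • A)ᴴ * (c • A) = ‖c‖ ^ 2 • (Aᴴ * A) := by
  rw [conjTranspose_smul, smul_mul, Matrix.mul_smul, smul_smul, RCLike.star_def, RCLike.conj_mul,
    ← RCLike.ofReal_pow, RCLike.real_smul_eq_coe_smul (K := 𝕜)]

theorem PosSemidef.one_sub_smul [Fintype n] [DecidableEq n] {S : Matrix n n 𝕜}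
    (h : (1 - S).PosSemidef) (hS : S.PosSemidef) {c : ℝ} (hc : c ≤ 1) :
    (1 - c • S).PosSemidef := by
  have : 1 - c • S = (1 - S) + (1 - c : ℝ) • S := by rw [sub_smul, one_smul]; abel
  rw [this]
  exact h.add (hS.smul (sub_nonneg.mpr hc))

end Matrix

theorem E00_add_E11 : E00 + E11 = 1 := by
  ext i j
  fin_cases i <;> fin_cases j <;> simp [E00, E11, one_apply]

theorem conjTranspose_E00_mul_E00 : E00ᴴ * E00 = E00 := by
  simp [E00, conjTranspose_single, single_mul_single_same]

theorem conjTranspose_E11_mul_E11 : E11ᴴ * E11 = E11 := by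
  simp [E11, conjTranspose_single, single_mul_single_same]

theorem conjTranspose_E00_mul_E11 : E00ᴴ * E11 = 0 := by
  simp [E00, E11, conjTranspose_single, single_mul_single_of_ne]

theorem conjTranspose_E11_mul_E00 : E11ᴴ * E00 = 0 := by
  simp [E00, E11, conjTranspose_single, single_mul_single_of_ne]

theorem posSemidef_E00 : E00.PosSemidef :=
  conjTranspose_E00_mul_E00 ▸ posSemidef_conjTranspose_mul_self E00

theorem posSemidef_E11 : E11.PosSemidef :=
  conjTranspose_E11_mul_E11 ▸ posSemidef_conjTranspose_mul_self E11

/-- Kraus condition for the quantum case: the operators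
`M_{ij} = |0⟩⟨0| ⊗ (μⱼ Kᵢ) + |1⟩⟨1| ⊗ (νᵢ Lⱼ)` satisfy `Σ_{i,j} M_{ij}† M_{ij} ≤ I`. -/
theorem qcase_kraus_condition {d e n m : ℕ}
    (K : Fin n → Matrix (Fin e) (Fin d) ℂ) (L : Fin m → Matrix (Fin e) (Fin d) ℂ)
    (ν : Fin n → ℂ) (μ : Fin m → ℂ)
    (hK : ((1 : Matrix (Fin d) (Fin d) ℂ) - ∑ i, (K i)ᴴ * K i).PosSemidef)
    (hL : ((1 : Matrix (Fin d) (Fin d) ℂ) - ∑ j, (L j)ᴴ * L j).PosSemidef)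
    (hν : ∑ i, ‖ν i‖ ^ 2 ≤ 1) (hμ : ∑ j, ‖μ j‖ ^ 2 ≤ 1) :
    ((1 : Matrix (Fin 2 × Fin d) (Fin 2 × Fin d) ℂ) -
      ∑ i, ∑ j,
        (E00 ⊗ₖ (μ j • K i) + E11 ⊗ₖ (ν i • L j))ᴴ *
          (E00 ⊗ₖ (μ j • K i) + E11 ⊗ₖ (ν i • L j))).PosSemidef := by
  have hM (i j) : (E00 ⊗ₖ (μ j • K i) + E11 ⊗ₖ (ν i • L j))ᴴ *
      (E00 ⊗ₖ (μ j • K i) + E11 ⊗ₖ (ν i • L j)) =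
        E00 ⊗ₖ (‖μ j‖ ^ 2 • ((K i)ᴴ * K i)) + E11 ⊗ₖ (‖ν i‖ ^ 2 • ((L j)ᴴ * L j)) := by
    rw [conjTranspose_mul_self_kronecker_add_kronecker conjTranspose_E00_mul_E00
      conjTranspose_E11_mul_E11 conjTranspose_E00_mul_E11 conjTranspose_E11_mul_E00,
      conjTranspose_smul_mul_smul, conjTranspose_smul_mul_smul]
  have hsum : ∑ i, ∑ j, (E00 ⊗ₖ (μ j • K i) + E11 ⊗ₖ (ν i • L j))ᴴ *
      (E00 ⊗ₖ (μ j • K i) + E11 ⊗ₖ (ν i • L j)) =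
        E00 ⊗ₖ ((∑ j, ‖μ j‖ ^ 2) • ∑ i, (K i)ᴴ * K i) +
          E11 ⊗ₖ ((∑ i, ‖ν i‖ ^ 2) • ∑ j, (L j)ᴴ * L j) := by
    simp only [hM, Finset.sum_add_distrib, Finset.sum_smul_sum, kronecker_sum_right]
    rw [Finset.sum_comm (γ := Fin m)]
  have hS := posSemidef_sum Finset.univ fun i _ => posSemidef_conjTranspose_mul_self (K i)
  have hT := posSemidef_sum Finset.univ fun j _ => posSemidef_conjTranspose_mul_self (L j)
  rw [hsum, one_sub_kronecker_add_kronecker E00_add_E11]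
  exact (posSemidef_E00.kronecker (hK.one_sub_smul hS hμ)).add
    (posSemidef_E11.kronecker (hL.one_sub_smul hT hν))
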